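/- arXiv:2009.09971 — 6 statements merged into one kernel-verified Lean document; each statement's English description precedes it below -/
import Mathlib

section
/- If G is a graph and u a vertex of G, then the maximum size of a minimal feedback vertex set of G is at least the maximum size of a minimal feedback vertex set of G - u. -/
open SimpleGraph

def IsFVS {V : Type*} (G : SimpleGraph V) (S : Set V) : Prop :=
  (G.induce Sᶜ).IsAcyclic

def IsMinFVS {V : Type*} (G : SimpleGraph V) (S : Set V) : Prop :=
  IsFVS G S ∧ ∀ T : Set V, T ⊂ S → ¬ IsFVS G T

noncomputable def mmfvs {V : Type*} (G : SimpleGraph V) : ℕ :=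
  sSup {k | ∃ S : Set V, IsMinFVS G S ∧ S.ncard = k}

lemma isAcyclic_of_emb {V W : Type*} {G : SimpleGraph V} {H : SimpleGraph W}
    (f : G ↪g H) (h : H.IsAcyclic) : G.IsAcyclic := by
  intro v c hc
  exact h (c.map f.toHom) (hc.map f.injective)

lemma fvs_pull {V : Type*} {G : SimpleGraph V} {s : Set V} {A : Set s} {B : Set V}
    (h : ∀ a : s, a ∈ Aᶜ → (a : V) ∈ Bᶜ) (hB : IsFVS G B) : IsFVS (G.induce s) A := by
  refine isAcyclic_of_emb (H := G.induce Bᶜ) ?_ hB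
  exact { toFun := fun x => ⟨x.1.1, h x.1 x.2⟩
          inj' := fun a b hab => by
            simp only [Subtype.mk.injEq] at hab
            exact Subtype.ext (Subtype.ext hab)
          map_rel_iff' := Iff.rfl }

lemma fvs_push {V : Type*} {G : SimpleGraph V} {s : Set V} {A : Set s} {B : Set V}
    (hs : ∀ x, x ∈ Bᶜ → x ∈ s) (h : ∀ x (hx : x ∈ Bᶜ), (⟨x, hs x hx⟩ : s) ∈ Aᶜ)
    (hA : IsFVS (G.induce s) A) : IsFVS G B := by
  refine isAcyclic_of_emb (H := (G.induce s).induce Aᶜ) ?_ hA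
  exact { toFun := fun x => ⟨⟨x.1, hs x.1 x.2⟩, h x.1 x.2⟩
          inj' := fun a b hab => by
            simp only [Subtype.mk.injEq] at hab
            exact Subtype.ext hab
          map_rel_iff' := Iff.rfl }

theorem mmfvs_delete_le {V : Type*} [Fintype V] [DecidableEq V]
    (G : SimpleGraph V) (u : V) :
    mmfvs (G.induce ({u}ᶜ : Set V)) ≤ mmfvs G := by
  classical
  have hbdd : BddAbove {k | ∃ S : Set V, IsMinFVS G S ∧ S.ncard = k} := by
    refine ⟨Fintype.card V, ?_⟩
    rintro k ⟨S, _, rfl⟩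
    calc S.ncard ≤ (Set.univ : Set V).ncard :=
          Set.ncard_le_ncard (Set.subset_univ S) (Set.toFinite _)
      _ = Fintype.card V := by rw [Set.ncard_univ, Nat.card_eq_fintype_card]
  apply csSup_le'
  rintro k ⟨S', hmin', rfl⟩
  -- (Subtype.val '' S') is the image of S' in V
  have huSv : u ∉ (Subtype.val '' S') := by
    rintro ⟨a, _, ha⟩
    exact a.2 ha
  have hcard : (Subtype.val '' S').ncard = S'.ncard := Set.ncard_image_of_injective _ Subtype.val_injective
  -- key: a proper fvs of G inside gives a proper fvs of G - u
  have pullT : ∀ T : Set V, IsFVS G T → IsFVS (G.induce ({u}ᶜ : Set V)) (Subtype.val ⁻¹' T) := by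
    intro T hT
    refine fvs_pull ?_ hT
    intro a ha
    exact ha
  by_cases hcase : IsFVS G (Subtype.val '' S')
  · -- (Subtype.val '' S') itself is a minimal fvs of G
    have hminSv : IsMinFVS G (Subtype.val '' S') := by
      refine ⟨hcase, ?_⟩
      intro T hTsub hT
      set T' : Set ({u}ᶜ : Set V) := Subtype.val ⁻¹' T with hT'
      have hT'fvs : IsFVS (G.induce ({u}ᶜ : Set V)) T' := pullT T hT
      have hT'S' : T' ⊂ S' := by
        constructor
        · intro a ha
          obtain ⟨b, hb, hba⟩ := hTsub.1 ha
          rwa [show b = a from Subtype.val_injective hba] at hb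
        · intro hcontra
          obtain ⟨x, hxSv, hxT⟩ := Set.exists_of_ssubset hTsub
          obtain ⟨a, haS', rfl⟩ := hxSv
          exact hxT (hcontra haS')
      exact hmin'.2 T' hT'S' hT'fvs
    exact le_trans (le_of_eq hcard.symm) (le_csSup hbdd ⟨(Subtype.val '' S'), hminSv, rfl⟩)
  · -- (Subtype.val '' S') ∪ {u} is a minimal fvs of G
    have hfvs : IsFVS G ((Subtype.val '' S') ∪ {u}) := by
      refine fvs_push (A := S') (fun x hx => ?_) (fun x hx => ?_) hmin'.1
      · intro hxu
        exact hx (Or.inr hxu)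
      · intro hmem
        exact hx (Or.inl ⟨_, hmem, rfl⟩)
    have hminU : IsMinFVS G ((Subtype.val '' S') ∪ {u}) := by
      refine ⟨hfvs, ?_⟩
      intro T hTsub hT
      set T' : Set ({u}ᶜ : Set V) := Subtype.val ⁻¹' T with hT'
      have hT'fvs : IsFVS (G.induce ({u}ᶜ : Set V)) T' := pullT T hT
      have hT'S' : T' ⊆ S' := by
        intro a ha
        rcases hTsub.1 ha with hSvm | hum
        · obtain ⟨b, hb, hba⟩ := hSvm
          rwa [show b = a from Subtype.val_injective hba] at hb
        · exact absurd hum a.2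
      rcases eq_or_ssubset_of_subset hT'S' with heq | hss
      · -- then T = (Subtype.val '' S'), so (Subtype.val '' S') is an fvs of G, contradiction
        have hSvT : (Subtype.val '' S') ⊆ T := by
          rintro x ⟨a, haS', rfl⟩
          rw [← heq] at haS'
          exact haS'
        have huT : u ∉ T := by
          intro huT
          apply hTsub.2
          intro x hx
          rcases hx with hxSv | hxu
          · exact hSvT hxSv
          · rwa [hxu]
        have hTeq : T = (Subtype.val '' S') := by
          apply Set.Subset.antisymm
          · intro x hx
            rcases hTsub.1 hx with h1 | h2
            · exact h1
            · exact absurd h2.symm (by rintro rfl; exact huT hx)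
          · exact hSvT
        rw [hTeq] at hT
        exact hcase hT
      · exact hmin'.2 T' hss hT'fvs
    have hcard2 : S'.ncard ≤ ((Subtype.val '' S') ∪ {u}).ncard := by
      rw [← hcard]
      exact Set.ncard_le_ncard Set.subset_union_left (Set.toFinite _)
    exact le_trans hcard2 (le_csSup hbdd ⟨(Subtype.val '' S') ∪ {u}, hminU, rfl⟩)
end

section
/- Let G be a graph and u,v adjacent vertices with no common neighbor. Then mmfvs(G) ≥ mmfvs(G/uv), where G/uv is the graph obtained by contracting the edge uv. -/
open SimpleGraph

def contract {V : Type*} (G : SimpleGraph V) (u v : V) :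
    SimpleGraph {x : V // x ≠ v} where
  Adj a b := a ≠ b ∧ (G.Adj a.1 b.1 ∨ (a.1 = u ∧ G.Adj v b.1) ∨ (b.1 = u ∧ G.Adj a.1 v))
  symm := by
    constructor
    rintro a b ⟨hab, h | ⟨h1, h2⟩ | ⟨h1, h2⟩⟩
    · exact ⟨hab.symm, Or.inl h.symm⟩
    · exact ⟨hab.symm, Or.inr (Or.inr ⟨h1, h2.symm⟩)⟩
    · exact ⟨hab.symm, Or.inr (Or.inl ⟨h1, h2.symm⟩)⟩
  loopless := by constructor; rintro a ⟨h, -⟩; exact h rfl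

/-!
Let `π : V → V(G/uv)` send `v` to the merged vertex (which is `u`) and fix every other vertex.
Every cycle `C'` of `G/uv` lifts to a cycle of `G` that `π` maps into `C'`: through the merged
vertex, `C'` opens into a path of `G - u - v` between neighbours of `{u, v}`, which closes up in
`G` through `u`, `v` or the edge `uv`. Conversely every cycle `C` of `G` yields a cycle of `G/uv`
inside `π(C)`: if `C` passes through both `u` and `v`, it contains a path `y ⋯ z` avoiding them with
`y ~ u` and `z ~ v`, and `y ≠ z` because `u` and `v` have no common neighbour; the merged vertex
closes it up. Hence, for a minimal feedback vertex set `S'` of `G/uv`, `π⁻¹(S')` is one of `G`;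
a minimal one `S ⊆ π⁻¹(S')` has `π(S)` a feedback vertex set inside `S'`, so `π(S) = S'` and
`|S'| ≤ |S|`.
-/

namespace SimpleGraph

variable {V W : Type*} {G : SimpleGraph V} {H : SimpleGraph W}

def induceHomOfAdj (f : V → W) (s : Set V)
    (hf : ∀ x ∈ s, ∀ y ∈ s, G.Adj x y → H.Adj (f x) (f y)) : G.induce s →g H where
  toFun x := f x
  map_rel' h := hf _ (Subtype.prop _) _ (Subtype.prop _) h

namespace Walk

variable {a b x : V}

theorem support_map_induce_induceHomOfAdj (f : V → W) {s : Set V}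
    (hf : ∀ x ∈ s, ∀ y ∈ s, G.Adj x y → H.Adj (f x) (f y))
    (p : G.Walk a b) (hp : ∀ x ∈ p.support, x ∈ s) :
    ((p.induce s hp).map (induceHomOfAdj f s hf)).support = p.support.map f := by
  simp [support_map, support_induce, induceHomOfAdj]

theorem IsPath.exists_map_of_injOn (f : V → W) {s : Set V} (hinj : s.InjOn f)
    (hf : ∀ x ∈ s, ∀ y ∈ s, G.Adj x y → H.Adj (f x) (f y))
    {p : G.Walk a b} (hp : p.IsPath) (hps : ∀ x ∈ p.support, x ∈ s) :
    ∃ q : H.Walk (f a) (f b), q.IsPath ∧ q.support = p.support.map f := by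
  refine ⟨(p.induce s hps).map (induceHomOfAdj f s hf), ?_,
    support_map_induce_induceHomOfAdj f hf p hps⟩
  refine IsPath.map (fun x y h => Subtype.ext (hinj x.2 y.2 h))
    (IsPath.of_map (f := (Embedding.induce s).toHom) ?_)
  rwa [map_induce]

theorem IsCycle.exists_map_of_injOn (f : V → W) {s : Set V} (hinj : s.InjOn f)
    (hf : ∀ x ∈ s, ∀ y ∈ s, G.Adj x y → H.Adj (f x) (f y))
    {c : G.Walk a a} (hc : c.IsCycle) (hcs : ∀ x ∈ c.support, x ∈ s) :
    ∃ c' : H.Walk (f a) (f a), c'.IsCycle ∧ c'.support = c.support.map f := by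
  refine ⟨(c.induce s hcs).map (induceHomOfAdj f s hf), ?_,
    support_map_induce_induceHomOfAdj f hf c hcs⟩
  refine IsCycle.map (fun x y h => Subtype.ext (hinj x.2 y.2 h))
    (IsCycle.of_map (f := (Embedding.induce s).toHom) ?_)
  rwa [map_induce]

theorem IsPath.isCycle_cons_concat {q : G.Walk a b} (hq : q.IsPath) (hx : x ∉ q.support)
    (hab : a ≠ b) (hxa : G.Adj x a) (hbx : G.Adj b x) : (cons hxa (q.concat hbx)).IsCycle := by
  refine (cons_isCycle_iff _ _).mpr ⟨hq.concat hx hbx, fun he => ?_⟩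
  rw [edges_concat, List.concat_eq_append, List.mem_append, List.mem_singleton] at he
  rcases he with he | he
  · exact hx (q.fst_mem_support_of_mem_edges he)
  · rw [Sym2.eq_iff] at he
    rcases he with ⟨rfl, -⟩ | ⟨-, rfl⟩
    · exact hx q.end_mem_support
    · exact hab rfl

theorem IsPath.end_notMem_support_dropLast {p : G.Walk a b} (hp : p.IsPath) (hp' : ¬ p.Nil) :
    b ∉ p.dropLast.support := by
  intro hb
  have hnd := hp.support_nodup
  rw [← dropLast_support_concat, ← support_dropLast hp', List.nodup_append] at hnd
  exact hnd.2.2 b hb b (List.mem_singleton_self b) rfl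

theorem IsPath.exists_isPath_adj_of_mem_support {p : G.Walk a b} (hp : p.IsPath)
    (hx : x ∈ p.support) (hax : a ≠ x) :
    ∃ (y : V) (q : G.Walk a y), q.IsPath ∧ x ∉ q.support ∧ G.Adj y x ∧ q.support ⊆ p.support := by
  classical
  have hr : (p.takeUntil x hx).IsPath := hp.takeUntil hx
  have hr' : ¬ (p.takeUntil x hx).Nil := not_nil_of_ne hax
  refine ⟨_, _, hr.dropLast, hr.end_notMem_support_dropLast hr', adj_penultimate hr', ?_⟩
  rw [support_dropLast hr']
  exact fun y hy => p.support_takeUntil_subset_support hx (List.dropLast_subset _ hy)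

theorem IsCycle.exists_isPath_of_mem_support {c : G.Walk a a} (hc : c.IsCycle)
    (hx : x ∈ c.support) :
    ∃ (y z : V) (q : G.Walk y z), q.IsPath ∧ x ∉ q.support ∧ y ≠ z ∧ G.Adj x y ∧ G.Adj z x ∧
      ∀ w, w ∈ c.support ↔ w = x ∨ w ∈ q.support := by
  classical
  have hd : (c.rotate x hx).IsCycle := hc.rotate hx
  obtain ⟨y, hxy, p, hdp⟩ := not_nil_iff.mp hd.not_nil
  have hsupp : ∀ w, w ∈ c.support ↔ w = x ∨ w ∈ p.support := fun w => by
    rw [← mem_support_rotate_iff c x hx, hdp, support_cons, List.mem_cons]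
  rw [hdp] at hd
  have hp : p.IsPath := ((cons_isCycle_iff _ _).mp hd).1
  have hp' : ¬ p.Nil := not_nil_of_isCycle_cons hd
  have hne : y ≠ p.penultimate := by
    simpa [snd_cons, penultimate_cons_of_not_nil _ _ hp'] using hd.snd_ne_penultimate
  refine ⟨y, _, p.dropLast, hp.dropLast, hp.end_notMem_support_dropLast hp', hne, hxy,
    adj_penultimate hp', fun w => ?_⟩
  rw [hsupp, ← dropLast_support_concat, ← support_dropLast hp', List.mem_append,
    List.mem_singleton]
  tauto

theorem IsCycle.exists_isPath_of_mem_support_of_mem_support {c : G.Walk a a} (hc : c.IsCycle)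
    {u v : V} (hu : u ∈ c.support) (hv : v ∈ c.support) (huv : u ≠ v) :
    ∃ (y z : V) (q : G.Walk y z), q.IsPath ∧ u ∉ q.support ∧ v ∉ q.support ∧ G.Adj u y ∧
      G.Adj z v ∧ q.support ⊆ c.support := by
  obtain ⟨y, z, p, hp, hup, hyz, huy, hzu, hcp⟩ := hc.exists_isPath_of_mem_support hu
  have hvp : v ∈ p.support := ((hcp v).mp hv).resolve_left huv.symm
  have hpc : p.support ⊆ c.support := fun w hw => (hcp w).mpr (Or.inr hw)
  clear hcp
  wlog hyv : y ≠ v generalizing y z p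
  · exact this z y p.reverse hp.reverse (by simpa using hup) hyz.symm hzu.symm huy.symm
      (by simpa using hvp) (fun w hw => hpc (by simpa using hw))
      fun h => hyz (not_not.mp hyv ▸ h).symm
  obtain ⟨w, q, hq, hvq, hwv, hqp⟩ := hp.exists_isPath_adj_of_mem_support hvp hyv
  exact ⟨y, w, q, hq, fun h => hup (hqp h), hvq, huy, hwv, fun x hx => hpc (hqp hx)⟩

end Walk

open Walk in
theorem Adj.exists_isCycle_of_isPath {u v a b : V} (huv : G.Adj u v) {q : G.Walk a b}
    (hq : q.IsPath) (hu : u ∉ q.support) (hv : v ∉ q.support) (hab : a ≠ b)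
    (ha : G.Adj u a ∨ G.Adj v a) (hb : G.Adj u b ∨ G.Adj v b) :
    ∃ (x : V) (c : G.Walk x x), c.IsCycle ∧ ∀ w ∈ c.support, w = u ∨ w = v ∨ w ∈ q.support := by
  have huvq : ∀ y, y = u ∨ y = v → y ∉ q.support := by rintro y (rfl | rfl) <;> assumption
  obtain ⟨y, hy, hya⟩ : ∃ y, (y = u ∨ y = v) ∧ G.Adj y a := by
    rcases ha with h | h
    exacts [⟨u, Or.inl rfl, h⟩, ⟨v, Or.inr rfl, h⟩]
  obtain ⟨z, hz, hbz⟩ : ∃ z, (z = u ∨ z = v) ∧ G.Adj b z := by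
    rcases hb with h | h
    exacts [⟨u, Or.inl rfl, h.symm⟩, ⟨v, Or.inr rfl, h.symm⟩]
  by_cases hyz : y = z
  · subst hyz
    refine ⟨y, _, hq.isCycle_cons_concat (huvq y hy) hab hya hbz, fun w hw => ?_⟩
    simp only [support_cons, support_concat, List.mem_cons, List.mem_append] at hw
    rcases hy with rfl | rfl <;> tauto
  · have hzy : G.Adj z y := by
      rcases hy with rfl | rfl <;> rcases hz with rfl | rfl
      exacts [absurd rfl hyz, huv.symm, huv, absurd rfl hyz]
    have hyq' : y ∉ (q.concat hbz).support := by
      rw [support_concat, List.mem_append, List.mem_singleton]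
      exact fun h => h.elim (huvq y hy) hyz
    have haz : a ≠ z := fun h => huvq z hz (h ▸ q.start_mem_support)
    refine ⟨y, _, (hq.concat (huvq z hz) hbz).isCycle_cons_concat hyq' haz hya hzy,
      fun w hw => ?_⟩
    simp only [support_cons, support_concat, List.mem_cons, List.mem_append] at hw
    rcases hy with rfl | rfl <;> rcases hz with rfl | rfl <;> tauto

end SimpleGraph

section

variable {V W : Type*} {G : SimpleGraph V} {H : SimpleGraph W}

theorem isFVS_iff_forall_isCycle {S : Set V} :
    IsFVS G S ↔ ∀ (a : V) (c : G.Walk a a), c.IsCycle → ∃ x ∈ c.support, x ∈ S := by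
  refine ⟨fun hS a c hc => ?_, fun h a c hc => ?_⟩
  · by_contra! hcS
    refine hS _ (Walk.IsCycle.of_map (f := (Embedding.induce Sᶜ).toHom) (p := c.induce Sᶜ hcS) ?_)
    rwa [Walk.map_induce]
  · obtain ⟨x, hx, hxS⟩ := h _ _ (hc.map (f := (Embedding.induce Sᶜ).toHom) Subtype.val_injective)
    rw [Walk.support_map, List.mem_map] at hx
    obtain ⟨y, -, rfl⟩ := hx
    exact y.2 hxS

theorem IsFVS.preimage {S : Set W} (hS : IsFVS H S) (f : V → W)
    (hf : ∀ (a : V) (c : G.Walk a a), c.IsCycle →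
      ∃ (b : W) (c' : H.Walk b b), c'.IsCycle ∧ ∀ y ∈ c'.support, ∃ x ∈ c.support, f x = y) :
    IsFVS G (f ⁻¹' S) := by
  rw [isFVS_iff_forall_isCycle] at hS ⊢
  intro a c hc
  obtain ⟨b, c', hc', hcc'⟩ := hf a c hc
  obtain ⟨y, hy, hyS⟩ := hS b c' hc'
  obtain ⟨x, hx, rfl⟩ := hcc' y hy
  exact ⟨x, hx, hyS⟩

theorem IsFVS.image {T : Set V} (hT : IsFVS G T) (f : V → W)
    (hf : ∀ (b : W) (c' : H.Walk b b), c'.IsCycle →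
      ∃ (a : V) (c : G.Walk a a), c.IsCycle ∧ ∀ x ∈ c.support, f x ∈ c'.support) :
    IsFVS H (f '' T) := by
  rw [isFVS_iff_forall_isCycle] at hT ⊢
  intro b c' hc'
  obtain ⟨a, c, hc, hcc'⟩ := hf b c' hc'
  obtain ⟨x, hx, hxT⟩ := hT a c hc
  exact ⟨f x, hcc' x hx, x, hxT, rfl⟩

theorem IsFVS.exists_isMinFVS_subset [Finite V] {S : Set V} (hS : IsFVS G S) :
    ∃ T ⊆ S, IsMinFVS G T := by
  obtain ⟨T, hTS, hT⟩ := exists_minimal_le_of_wellFoundedLT (IsFVS G) S hS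
  exact ⟨T, hTS, hT.prop, fun T' hT' hT'fvs => hT'.not_subset (hT.le_of_le hT'fvs hT'.subset)⟩

theorem IsMinFVS.ncard_le_mmfvs [Finite V] {S : Set V} (hS : IsMinFVS G S) :
    S.ncard ≤ mmfvs G :=
  le_csSup ⟨Nat.card V, by rintro _ ⟨T, -, rfl⟩; exact T.ncard_le_card⟩ ⟨S, hS, rfl⟩

section Contract

variable {u v : V}

open Classical in
noncomputable def contractProj (huv : u ≠ v) (x : V) : {x : V // x ≠ v} :=
  if hx : x = v then ⟨u, huv⟩ else ⟨x, hx⟩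

variable (huv : u ≠ v)

theorem contractProj_of_ne {x : V} (hx : x ≠ v) : contractProj huv x = ⟨x, hx⟩ := dif_neg hx

theorem contractProj_right : contractProj huv v = ⟨u, huv⟩ := dif_pos rfl

theorem contractProj_left : contractProj huv u = ⟨u, huv⟩ := contractProj_of_ne huv huv

@[simp]
theorem contractProj_val (a : {x : V // x ≠ v}) : contractProj huv a = a :=
  contractProj_of_ne huv a.2

theorem contractProj_eq_left_iff {x : V} :
    contractProj huv x = ⟨u, huv⟩ ↔ x = u ∨ x = v := by
  by_cases hx : x = v
  · simp [hx, contractProj_right]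
  · simp [hx, contractProj_of_ne huv hx]

theorem injOn_contractProj_of_ne_left : {x | x ≠ u}.InjOn (contractProj huv) := by
  intro x hx y hy h
  by_cases hxv : x = v <;> by_cases hyv : y = v
  · rw [hxv, hyv]
  all_goals simp_all [contractProj_of_ne, contractProj_right, eq_comm]

theorem injOn_contractProj_of_ne_right : {x | x ≠ v}.InjOn (contractProj huv) := by
  intro x hx y hy h
  simpa [contractProj_of_ne huv hx, contractProj_of_ne huv hy] using h

theorem contract_adj_contractProj {x y : V} (h : G.Adj x y)
    (hxy : contractProj huv x ≠ contractProj huv y) :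
    (contract G u v).Adj (contractProj huv x) (contractProj huv y) := by
  refine ⟨hxy, ?_⟩
  by_cases hxv : x = v <;> by_cases hyv : y = v
  · exact absurd (hxv.trans hyv.symm) h.ne
  all_goals simp_all [contractProj_of_ne, contractProj_right]

theorem contract_adj_contractProj_of_injOn {s : Set V} (hs : s.InjOn (contractProj huv)) :
    ∀ x ∈ s, ∀ y ∈ s, G.Adj x y → (contract G u v).Adj (contractProj huv x) (contractProj huv y) :=
  fun _ hx _ hy h => contract_adj_contractProj huv h fun e => h.ne (hs hx hy e)

theorem adj_of_contract_adj {a b : {x : V // x ≠ v}} (h : (contract G u v).Adj a b)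
    (ha : a.val ≠ u) (hb : b.val ≠ u) : G.Adj a b := by
  rcases h.2 with h | ⟨h, -⟩ | ⟨h, -⟩
  exacts [h, absurd h ha, absurd h hb]

theorem contract_adj_merged_iff {b : {x : V // x ≠ v}} :
    (contract G u v).Adj ⟨u, huv⟩ b ↔ b.val ≠ u ∧ (G.Adj u b ∨ G.Adj v b) := by
  constructor
  · rintro ⟨hne, h | ⟨-, h⟩ | ⟨h, -⟩⟩
    exacts [⟨fun e => hne (Subtype.ext e.symm), Or.inl h⟩,
      ⟨fun e => hne (Subtype.ext e.symm), Or.inr h⟩, absurd (Subtype.ext h.symm) hne]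
  · rintro ⟨hb, h | h⟩
    exacts [⟨fun e => hb (congrArg Subtype.val e).symm, Or.inl h⟩,
      ⟨fun e => hb (congrArg Subtype.val e).symm, Or.inr (Or.inl ⟨rfl, h⟩)⟩]

theorem exists_isCycle_of_isCycle_contract (huv : G.Adj u v) {b : {x : V // x ≠ v}}
    {c' : (contract G u v).Walk b b} (hc' : c'.IsCycle) :
    ∃ (a : V) (c : G.Walk a a), c.IsCycle ∧
      ∀ x ∈ c.support, contractProj huv.ne x ∈ c'.support := by
  have hval : {a : {x : V // x ≠ v} | a.val ≠ u}.InjOn Subtype.val := Subtype.val_injective.injOn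
  have hadj : ∀ a ∈ {a : {x : V // x ≠ v} | a.val ≠ u}, ∀ b ∈ {a : {x : V // x ≠ v} | a.val ≠ u},
      (contract G u v).Adj a b → G.Adj a b := fun a ha b hb h => adj_of_contract_adj h ha hb
  have havoid : ∀ {y z} (p : (contract G u v).Walk y z), ⟨u, huv.ne⟩ ∉ p.support →
      ∀ a ∈ p.support, a.val ≠ u := fun p hp a ha h =>
    hp (by rwa [show a = ⟨u, huv.ne⟩ from Subtype.ext h] at ha)
  by_cases hw : ⟨u, huv.ne⟩ ∈ c'.support
  swap
  · obtain ⟨c, hc, hcc'⟩ := hc'.exists_map_of_injOn Subtype.val hval hadj (havoid c' hw)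
    refine ⟨_, c, hc, fun x hx => ?_⟩
    obtain ⟨a, ha, rfl⟩ := List.mem_map.mp (hcc' ▸ hx)
    rwa [contractProj_val]
  obtain ⟨y, z, q', hq', hwq', hyz, hwy, hzw, hc'q'⟩ := hc'.exists_isPath_of_mem_support hw
  obtain ⟨q, hq, hqq'⟩ := hq'.exists_map_of_injOn Subtype.val hval hadj (havoid q' hwq')
  have huq : u ∉ q.support := fun hu => by
    obtain ⟨a, ha, h⟩ := List.mem_map.mp (hqq' ▸ hu)
    exact havoid q' hwq' a ha h
  have hvq : v ∉ q.support := fun hv => by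
    obtain ⟨a, -, h⟩ := List.mem_map.mp (hqq' ▸ hv)
    exact a.2 h
  obtain ⟨x, c, hc, hcq⟩ := huv.exists_isCycle_of_isPath hq huq hvq
    (Subtype.val_injective.ne hyz) ((contract_adj_merged_iff huv.ne).mp hwy).2
    ((contract_adj_merged_iff huv.ne).mp hzw.symm).2
  refine ⟨x, c, hc, fun w hwc => ?_⟩
  rcases hcq w hwc with rfl | rfl | hwq
  · rwa [contractProj_left]
  · rwa [contractProj_right]
  · obtain ⟨a, ha, rfl⟩ := List.mem_map.mp (hqq' ▸ hwq)
    rw [contractProj_val]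
    exact (hc'q' a).mpr (Or.inr ha)

theorem exists_isCycle_contract_of_injOn {s : Set V} (hs : s.InjOn (contractProj huv)) {a : V}
    {c : G.Walk a a} (hc : c.IsCycle) (hcs : ∀ x ∈ c.support, x ∈ s) :
    ∃ (b : {x : V // x ≠ v}) (c' : (contract G u v).Walk b b), c'.IsCycle ∧
      ∀ y ∈ c'.support, ∃ x ∈ c.support, contractProj huv x = y := by
  obtain ⟨c', hc', hc'c⟩ :=
    hc.exists_map_of_injOn _ hs (contract_adj_contractProj_of_injOn huv hs) hcs
  exact ⟨_, c', hc', fun y hy => List.mem_map.mp (hc'c ▸ hy)⟩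

theorem exists_isCycle_contract_of_isPath {y z : V} {q : G.Walk y z} (hq : q.IsPath)
    (huq : u ∉ q.support) (hvq : v ∉ q.support) (hyz : y ≠ z) (huy : G.Adj u y)
    (hzv : G.Adj z v) :
    ∃ (b : {x : V // x ≠ v}) (c' : (contract G u v).Walk b b), c'.IsCycle ∧
      ∀ w ∈ c'.support, w = ⟨u, huv⟩ ∨ ∃ x ∈ q.support, contractProj huv x = w := by
  have hinj := injOn_contractProj_of_ne_right huv
  obtain ⟨q', hq', hq'q⟩ := hq.exists_map_of_injOn _ hinj
    (contract_adj_contractProj_of_injOn huv hinj) fun x hx (h : x = v) => hvq (h ▸ hx)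
  have hq'q' : ∀ w ∈ q'.support, ∃ x ∈ q.support, contractProj huv x = w :=
    fun w hw => List.mem_map.mp (hq'q ▸ hw)
  have hwq' : ⟨u, huv⟩ ∉ q'.support := fun hw => by
    obtain ⟨x, hx, hxu⟩ := hq'q' _ hw
    rcases (contractProj_eq_left_iff huv).mp hxu with rfl | rfl
    exacts [huq hx, hvq hx]
  have hyv : y ≠ v := fun h => hvq (h ▸ q.start_mem_support)
  have hzv' : z ≠ v := fun h => hvq (h ▸ q.end_mem_support)
  have hwy : (contract G u v).Adj ⟨u, huv⟩ (contractProj huv y) := by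
    rw [contractProj_of_ne huv hyv, contract_adj_merged_iff]
    exact ⟨fun h => huq (h ▸ q.start_mem_support), Or.inl huy⟩
  have hzw : (contract G u v).Adj (contractProj huv z) ⟨u, huv⟩ := by
    rw [contractProj_of_ne huv hzv', adj_comm, contract_adj_merged_iff]
    exact ⟨fun h => huq (h ▸ q.end_mem_support), Or.inr hzv.symm⟩
  refine ⟨_, _, hq'.isCycle_cons_concat hwq' (fun e => hyz (hinj hyv hzv' e)) hwy hzw,
    fun w hw => ?_⟩
  rw [Walk.support_cons, Walk.support_concat, List.mem_cons, List.mem_append,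
    List.mem_singleton] at hw
  rcases hw with rfl | hw | rfl
  exacts [Or.inl rfl, Or.inr (hq'q' w hw), Or.inl rfl]

theorem exists_isCycle_contract_of_isCycle (huv : G.Adj u v)
    (hcommon : G.neighborSet u ∩ G.neighborSet v = ∅) {a : V} {c : G.Walk a a} (hc : c.IsCycle) :
    ∃ (b : {x : V // x ≠ v}) (c' : (contract G u v).Walk b b), c'.IsCycle ∧
      ∀ y ∈ c'.support, ∃ x ∈ c.support, contractProj huv.ne x = y := by
  by_cases hu : u ∈ c.support
  swap
  · exact exists_isCycle_contract_of_injOn huv.ne (injOn_contractProj_of_ne_left huv.ne) hc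
      fun x hx (h : x = u) => hu (h ▸ hx)
  by_cases hv : v ∈ c.support
  swap
  · exact exists_isCycle_contract_of_injOn huv.ne (injOn_contractProj_of_ne_right huv.ne) hc
      fun x hx (h : x = v) => hv (h ▸ hx)
  obtain ⟨y, z, q, hq, huq, hvq, huy, hzv, hqc⟩ :=
    hc.exists_isPath_of_mem_support_of_mem_support hu hv huv.ne
  have hyz : y ≠ z := by
    rintro rfl
    exact (Set.eq_empty_iff_forall_notMem.mp hcommon) y ⟨huy, hzv.symm⟩
  obtain ⟨b, c', hc', hc'q⟩ := exists_isCycle_contract_of_isPath huv.ne hq huq hvq hyz huy hzv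
  refine ⟨b, c', hc', fun w hw => ?_⟩
  rcases hc'q w hw with rfl | ⟨x, hx, rfl⟩
  exacts [⟨u, hu, contractProj_left huv.ne⟩, ⟨x, hqc hx, rfl⟩]

end Contract

end

theorem mmfvs_contract_le_general {V : Type*} [Fintype V]
    (G : SimpleGraph V) (u v : V) (huv : G.Adj u v)
    (hcommon : G.neighborSet u ∩ G.neighborSet v = ∅) :
    mmfvs (contract G u v) ≤ mmfvs G := by
  refine csSup_le' ?_
  rintro _ ⟨S', ⟨hS', hS'min⟩, rfl⟩
  obtain ⟨S, hSS', hS⟩ := (hS'.preimage (contractProj huv.ne) fun _ _ hc =>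
    exists_isCycle_contract_of_isCycle huv hcommon hc).exists_isMinFVS_subset
  have himage : contractProj huv.ne '' S = S' := by
    by_contra hne
    refine hS'min _ (ssubset_of_subset_of_ne ?_ hne) (hS.1.image _ fun _ _ hc' =>
      exists_isCycle_of_isCycle_contract huv hc')
    exact (Set.image_mono hSS').trans (Set.image_preimage_subset _ _)
  calc S'.ncard = (contractProj huv.ne '' S).ncard := by rw [himage]
    _ ≤ S.ncard := Set.ncard_image_le (Set.toFinite S)
    _ ≤ mmfvs G := hS.ncard_le_mmfvs

theorem mmfvs_contract_le {V : Type*} [Fintype V] [DecidableEq V]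
    (G : SimpleGraph V) (u v : V) (huv : G.Adj u v)
    (hcommon : G.neighborSet u ∩ G.neighborSet v = ∅) :
    mmfvs (contract G u v) ≤ mmfvs G :=
  mmfvs_contract_le_general G u v huv hcommon
end

section
/- If u is a vertex of G with degree at most 1, then mmfvs(G - u) = mmfvs(G). -/
open SimpleGraph

/-! A vertex of degree at most one lies on no cycle, so adding it to or removing it from a set
of vertices never changes whether that set induces a forest. Hence no minimal feedback vertex
set of `G` contains `u`, and viewing a subset of `V - u` as a subset of `V` is a size-preserving
bijection between the minimal feedback vertex sets of `G - u` and those of `G`. -/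

namespace SimpleGraph

variable {V : Type*} {G : SimpleGraph V}

lemma Walk.IsCycle.two_le_ncard_neighborSet {u v : V} {c : G.Walk u u} (hc : c.IsCycle)
    (hv : v ∈ c.support) (hfin : (G.neighborSet v).Finite) : 2 ≤ (G.neighborSet v).ncard :=
  hc.ncard_neighborSet_toSubgraph_eq_two hv ▸
    Set.ncard_le_ncard (Subgraph.neighborSet_subset _ v) hfin

lemma notMem_support_of_ncard_neighborSet_le_one {u : V} (hfin : (G.neighborSet u).Finite)
    (hdeg : (G.neighborSet u).ncard ≤ 1) {v : V} {c : G.Walk v v} (hc : c.IsCycle) :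
    u ∉ c.support := fun hu => by
  have := hc.two_le_ncard_neighborSet hu hfin
  omega

lemma isAcyclic_induce_iff {s : Set V} :
    (G.induce s).IsAcyclic ↔ ∀ ⦃v⦄ (c : G.Walk v v), c.IsCycle → ¬ ∀ x ∈ c.support, x ∈ s := by
  refine ⟨fun h v c hc hs => h (c.induce s hs) ?_, fun h v c hc => ?_⟩
  · exact (Walk.isCycle_map_iff_of_injective (f := (Embedding.induce s).toHom)
      Subtype.val_injective).mp (by rwa [Walk.map_induce])
  · refine h (c.map (Embedding.induce s).toHom) (hc.map Subtype.val_injective) ?_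
    simp only [Walk.support_map, List.mem_map]
    rintro _ ⟨x, -, rfl⟩
    exact x.2

lemma Embedding.isAcyclic_iff {W : Type*} {H : SimpleGraph W} (f : H ↪g G) :
    H.IsAcyclic ↔
      ∀ ⦃v⦄ (c : G.Walk v v), c.IsCycle → ¬ ∀ x ∈ c.support, x ∈ Set.range f :=
  f.isoInduceRange.isAcyclic_iff.trans isAcyclic_induce_iff

end SimpleGraph

section FeedbackVertexSet

variable {V : Type*} {G : SimpleGraph V}

lemma isFVS_induce_iff {s : Set V} (S : Set s) :
    IsFVS (G.induce s) S ↔ IsFVS G (Subtype.val '' S ∪ sᶜ) := by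
  let f : (G.induce s).induce Sᶜ ↪g G := (Embedding.induce s).comp (Embedding.induce Sᶜ)
  have hrange : Set.range f = (Subtype.val '' S ∪ sᶜ)ᶜ := by
    change Set.range ((Subtype.val : s → V) ∘ (Subtype.val : (Sᶜ : Set s) → s)) = _
    rw [Set.range_comp, Subtype.range_coe]
    ext x
    simp [and_comm]
  rw [IsFVS, IsFVS, f.isAcyclic_iff, hrange, isAcyclic_induce_iff]

lemma isFVS_insert_iff {u : V} (hu : ∀ ⦃v⦄ (c : G.Walk v v), c.IsCycle → u ∉ c.support)
    (S : Set V) : IsFVS G (insert u S) ↔ IsFVS G S := by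
  simp only [IsFVS, isAcyclic_induce_iff]
  refine forall₂_congr fun v c => imp_congr_right fun hc => not_congr <|
    forall₂_congr fun x hx => ?_
  have hxu : x ≠ u := fun h => hu c hc (h ▸ hx)
  simp [hxu]

lemma notMem_of_isMinFVS {u : V} (hu : ∀ ⦃v⦄ (c : G.Walk v v), c.IsCycle → u ∉ c.support)
    {S : Set V} (hS : IsMinFVS G S) : u ∉ S := fun huS =>
  hS.2 (S \ {u}) (Set.sdiff_singleton_ssubset.mpr huS) <| by
    rw [← isFVS_insert_iff hu, Set.insert_sdiff_singleton, Set.insert_eq_of_mem huS]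
    exact hS.1

lemma isFVS_induce_compl_singleton_iff {u : V}
    (hu : ∀ ⦃v⦄ (c : G.Walk v v), c.IsCycle → u ∉ c.support) (S : Set ({u}ᶜ : Set V)) :
    IsFVS (G.induce {u}ᶜ) S ↔ IsFVS G (Subtype.val '' S) := by
  rw [isFVS_induce_iff, compl_compl, Set.union_singleton, isFVS_insert_iff hu]

lemma isMinFVS_induce_compl_singleton_iff {u : V}
    (hu : ∀ ⦃v⦄ (c : G.Walk v v), c.IsCycle → u ∉ c.support) (S : Set ({u}ᶜ : Set V)) :
    IsMinFVS (G.induce {u}ᶜ) S ↔ IsMinFVS G (Subtype.val '' S) := by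
  have hssubset {A B : Set ({u}ᶜ : Set V)} : Subtype.val '' A ⊂ Subtype.val '' B ↔ A ⊂ B :=
    Subtype.val_injective.injOn.image_ssubset_image_iff (Set.subset_univ A) (Set.subset_univ B)
  simp only [IsMinFVS, isFVS_induce_compl_singleton_iff hu]
  refine and_congr_right fun _ => ⟨fun h T hT => ?_, fun h T hT => h _ (hssubset.mpr hT)⟩
  obtain ⟨T, rfl⟩ := Set.subset_range_iff_exists_image_eq.mp
    (hT.subset.trans (Set.image_subset_range _ _))
  exact h T (hssubset.mp hT)

end FeedbackVertexSet

theorem mmfvs_delete_low_degree_general {V : Type*} [Fintype V]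
    (G : SimpleGraph V) (u : V) (hdeg : (G.neighborSet u).ncard ≤ 1) :
    mmfvs (G.induce ({u}ᶜ : Set V)) = mmfvs G := by
  have hu : ∀ ⦃v⦄ (c : G.Walk v v), c.IsCycle → u ∉ c.support := fun _ _ hc =>
    notMem_support_of_ncard_neighborSet_le_one (Set.toFinite _) hdeg hc
  unfold mmfvs
  congr 1
  ext k
  constructor
  · rintro ⟨S, hS, rfl⟩
    exact ⟨_, (isMinFVS_induce_compl_singleton_iff hu S).mp hS,
      Set.ncard_image_of_injective S Subtype.val_injective⟩
  · rintro ⟨S, hS, rfl⟩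
    obtain ⟨S, rfl⟩ : ∃ S' : Set ({u}ᶜ : Set V), Subtype.val '' S' = S :=
      Set.subset_range_iff_exists_image_eq.mp <| by
        rw [Subtype.range_coe]
        exact Set.subset_compl_singleton_iff.mpr (notMem_of_isMinFVS hu hS)
    exact ⟨S, (isMinFVS_induce_compl_singleton_iff hu S).mpr hS,
      (Set.ncard_image_of_injective S Subtype.val_injective).symm⟩

theorem mmfvs_delete_low_degree {V : Type*} [Fintype V] [DecidableEq V]
    (G : SimpleGraph V) (u : V) (hdeg : (G.neighborSet u).ncard ≤ 1) :
    mmfvs (G.induce ({u}ᶜ : Set V)) = mmfvs G :=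
  mmfvs_delete_low_degree_general G u hdeg
end

section
/- Let G be a reduced graph (that is, neither of the two reduction rules applies) and let S be a feedback vertex set of G with induced forest F = V∖S. Then |N(S) ∩ F| ≥ |F|/4. -/
open SimpleGraph

def Reduced {V : Type*} (G : SimpleGraph V) : Prop :=
  (∀ v : V, 2 ≤ (G.neighborSet v).ncard) ∧
  ∀ u v : V, G.Adj u v → (G.neighborSet u).ncard = 2 → (G.neighborSet v).ncard = 2 →
    (G.neighborSet u ∩ G.neighborSet v).Nonempty


section Aux
open Finset

private lemma acyclic_le {W : Type*} {G H : SimpleGraph W} (hle : H ≤ G) (hG : G.IsAcyclic) :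
    H.IsAcyclic := fun _ c hc => hG (c.mapLe hle) (hc.mapLe hle)

private lemma forest_edge_bound {W : Type*} [Fintype W] :
    ∀ (n : ℕ) (H : SimpleGraph W) [Fintype H.edgeSet] [Fintype H.ConnectedComponent],
      H.IsAcyclic → #H.edgeFinset = n →
      n + Fintype.card H.ConnectedComponent ≤ Fintype.card W := by
  classical
  intro n
  induction n with
  | zero =>
    intro H _ _ hac h0
    have hbot : H = ⊥ := by
      rw [← edgeSet_eq_empty, ← Set.toFinset_eq_empty]
      simpa [edgeFinset] using card_eq_zero.mp h0
    subst hbot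
    have : Function.Bijective ((⊥ : SimpleGraph W).connectedComponentMk) := by
      constructor
      · intro u v huv
        exact reachable_bot.mp (ConnectedComponent.exact huv)
      · exact Quot.exists_rep
    rw [Fintype.card_of_bijective this]
    omega
  | succ n ih =>
    intro H _ _ hac hcard
    obtain ⟨e, he⟩ : H.edgeFinset.Nonempty := card_pos.mp (by omega)
    induction e using Sym2.ind with
    | _ u v =>
    rw [mem_edgeFinset, mem_edgeSet] at he
    set H' := H.deleteEdges {s(u, v)} with hH'
    have hle : H' ≤ H := deleteEdges_le _
    have hac' : H'.IsAcyclic := acyclic_le hle hac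
    have hcard' : #H'.edgeFinset = n := by
      have h1 : H'.edgeSet = H.edgeSet \ {s(u, v)} := edgeSet_deleteEdges _
      have h2 : #H'.edgeFinset = H'.edgeSet.ncard := (Set.ncard_eq_toFinset_card' _).symm
      have h3 : #H.edgeFinset = H.edgeSet.ncard := (Set.ncard_eq_toFinset_card' _).symm
      rw [h2, h1, Set.ncard_diff_singleton_of_mem (H.mem_edgeSet.mpr he)]
      omega
    have hkey := ih H' hac' hcard'
    have hbridge : ¬ H'.Reachable u v := by
      have := (isAcyclic_iff_forall_adj_isBridge.mp hac) he
      exact this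
    set φ : H'.ConnectedComponent → H.ConnectedComponent :=
      ConnectedComponent.map (Hom.ofLE hle) with hφ
    have hsurj : Function.Surjective φ := by
      intro c
      refine c.ind (fun w => ⟨H'.connectedComponentMk w, ?_⟩)
      simp [hφ, ConnectedComponent.map_mk, Hom.ofLE_apply]
    have hninj : ¬ Function.Injective φ := by
      intro hinj
      apply hbridge
      have h1 : φ (H'.connectedComponentMk u) = φ (H'.connectedComponentMk v) := by
        simp only [hφ, ConnectedComponent.map_mk, Hom.ofLE_apply]
        exact ConnectedComponent.sound he.reachable
      exact ConnectedComponent.exact (hinj h1)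
    have hlt := Fintype.card_lt_of_surjective_not_injective φ hsurj hninj
    omega

private lemma forest_main {W : Type*} [Fintype W] (H : SimpleGraph W) [DecidableRel H.Adj]
    (hac : H.IsAcyclic) (X : Finset W)
    (h2 : ∀ v : W, v ∉ X → 2 ≤ H.degree v)
    (h22 : ∀ u v : W, u ∉ X → v ∉ X → H.Adj u v → H.degree u = 2 → H.degree v = 2 → False) :
    Fintype.card W ≤ 4 * #X := by
  classical
  set A : Finset W := univ.filter (fun v => v ∉ X ∧ 3 ≤ H.degree v) with hA
  set B : Finset W := univ.filter (fun v => v ∉ X ∧ H.degree v = 2) with hB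
  set X0 : Finset W := univ.filter (fun v => H.degree v = 0) with hX0
  set e : ℕ := #H.edgeFinset with he
  set c : ℕ := Fintype.card H.ConnectedComponent with hc
  -- basic disjointness
  have hdisjXA : Disjoint X A := by
    rw [Finset.disjoint_left]; intro a ha haA
    simp only [hA, mem_filter] at haA
    exact haA.2.1 ha
  have hdisjXB : Disjoint X B := by
    rw [Finset.disjoint_left]; intro a ha haB
    simp only [hB, mem_filter] at haB
    exact haB.2.1 ha
  have hdisjAB : Disjoint A B := by
    rw [Finset.disjoint_left]; intro a haA haB
    simp only [hA, mem_filter] at haA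
    simp only [hB, mem_filter] at haB
    omega
  have hcover : X ∪ (A ∪ B) = univ := by
    ext v
    simp only [Finset.mem_union, hA, hB, mem_filter, mem_univ, true_and, iff_true]
    by_cases hv : v ∈ X
    · exact Or.inl hv
    · have := h2 v hv
      right
      by_cases h3 : 3 ≤ H.degree v
      · exact Or.inl ⟨hv, h3⟩
      · exact Or.inr ⟨hv, by omega⟩
  -- partition
  have hpart : #X + #A + #B = Fintype.card W := by
    have h := congrArg Finset.card hcover
    rw [Finset.card_union_of_disjoint (Finset.disjoint_union_right.mpr ⟨hdisjXA, hdisjXB⟩),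
      Finset.card_union_of_disjoint hdisjAB, Finset.card_univ] at h
    omega
  -- forest bound
  have hforest : e + c ≤ Fintype.card W := forest_edge_bound e H hac rfl
  -- handshake
  have hsum : ∑ v ∈ X, H.degree v + (∑ v ∈ A, H.degree v + ∑ v ∈ B, H.degree v) = 2 * e := by
    rw [← sum_degrees_eq_twice_card_edges, ← hcover,
      Finset.sum_union (Finset.disjoint_union_right.mpr ⟨hdisjXA, hdisjXB⟩),
      Finset.sum_union hdisjAB]
  -- degree sums bounds
  have hsA : 3 * #A ≤ ∑ v ∈ A, H.degree v := by
    calc 3 * #A = #A • 3 := by rw [smul_eq_mul, mul_comm]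
    _ ≤ ∑ v ∈ A, H.degree v := Finset.card_nsmul_le_sum A _ 3 (fun v hv => by
        simp only [hA, mem_filter] at hv; exact hv.2.2)
  have hsB : ∑ v ∈ B, H.degree v = 2 * #B := by
    rw [Finset.sum_congr rfl (fun v hv => by
      simp only [hB, mem_filter] at hv; exact hv.2.2), Finset.sum_const, smul_eq_mul, mul_comm]
  have hsX : #X ≤ ∑ v ∈ X, H.degree v + #X0 := by
    have c3 := Finset.card_filter_add_card_filter_not
      (s := X) (p := fun v => H.degree v = 0)
    have c2 : #(X.filter (fun v => H.degree v = 0)) ≤ #X0 := by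
      apply Finset.card_le_card
      exact Finset.filter_subset_filter _ (Finset.subset_univ X)
    have c1 : #(X.filter (fun v => ¬ H.degree v = 0)) ≤ ∑ v ∈ X, H.degree v := by
      calc #(X.filter (fun v => ¬ H.degree v = 0))
          = #(X.filter (fun v => ¬ H.degree v = 0)) • 1 := by rw [smul_eq_mul, mul_one]
        _ ≤ ∑ v ∈ X.filter (fun v => ¬ H.degree v = 0), H.degree v :=
            Finset.card_nsmul_le_sum _ _ 1 (fun v hv => by
              simp only [mem_filter] at hv; omega)
        _ ≤ ∑ v ∈ X, H.degree v :=
            Finset.sum_le_sum_of_subset (Finset.filter_subset _ _)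
    omega
  -- independent degree-2 vertices: 2#B ≤ e
  have hB2 : 2 * #B ≤ e := by
    have hBne : ∀ u ∈ B, ∀ v ∈ B, u ≠ v → ¬ H.Adj u v := by
      intro u hu v hv _ hadj
      simp only [hB, mem_filter] at hu hv
      exact h22 u v hu.2.1 hv.2.1 hadj hu.2.2 hv.2.2
    have hdisjI : ∀ u ∈ B, ∀ v ∈ B, u ≠ v →
        Disjoint (H.incidenceFinset u) (H.incidenceFinset v) := by
      intro u hu v hv hne
      rw [Finset.disjoint_left]
      intro a hau hav
      rw [mem_incidenceFinset] at hau hav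
      have := H.incidenceSet_inter_incidenceSet_of_not_adj (hBne u hu v hv hne) hne
      have : a ∈ (∅ : Set (Sym2 W)) := this ▸ Set.mem_inter hau hav
      exact this
    have hinc2 : ∀ v ∈ B, #(H.incidenceFinset v) = 2 := by
      intro v hv
      rw [H.card_incidenceFinset_eq_degree v]
      simp only [hB, mem_filter] at hv
      exact hv.2.2
    have hcardBU : #(B.biUnion (fun v => H.incidenceFinset v)) = 2 * #B := by
      rw [Finset.card_biUnion hdisjI, Finset.sum_congr rfl hinc2, Finset.sum_const, smul_eq_mul,
        mul_comm]
    have hsub : B.biUnion (fun v => H.incidenceFinset v) ⊆ H.edgeFinset := by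
      intro a ha
      rw [Finset.mem_biUnion] at ha
      obtain ⟨v, -, hv⟩ := ha
      rw [mem_incidenceFinset] at hv
      rw [mem_edgeFinset]
      exact H.incidenceSet_subset v hv
    calc 2 * #B = #(B.biUnion (fun v => H.incidenceFinset v)) := hcardBU.symm
      _ ≤ e := Finset.card_le_card hsub
  -- isolated vertices give components
  have hX0c : #X0 ≤ c := by
    rw [hc, ← Finset.card_univ]
    apply Finset.card_le_card_of_injOn (fun v => H.connectedComponentMk v)
      (fun v _ => Finset.mem_univ _)
    intro u hu v hv heq
    simp only [hX0, mem_coe, mem_filter] at hu hv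
    by_contra hne
    obtain ⟨p⟩ := ConnectedComponent.exact heq
    cases p with
    | nil => exact hne rfl
    | cons h q =>
      have : 0 < H.degree u := by
        rw [H.degree_pos_iff_exists_adj]
        exact ⟨_, h⟩
      omega
  omega

end Aux

theorem fvs_many_neighbors {V : Type*} [Fintype V]
    (G : SimpleGraph V) (hG : Reduced G) (S : Set V) (hS : IsFVS G S) :
    (Sᶜ : Set V).ncard ≤ 4 * (((⋃ u ∈ S, G.neighborSet u) \ S) ∩ Sᶜ).ncard := by
  classical
  haveI : Fintype ↥(Sᶜ) := Fintype.ofFinite _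
  set T : Set V := ((⋃ u ∈ S, G.neighborSet u) \ S) ∩ Sᶜ with hT
  set H : SimpleGraph ↥(Sᶜ) := G.induce Sᶜ with hH
  haveI : DecidableRel H.Adj := Classical.decRel _
  have hac : H.IsAcyclic := hS
  set X : Finset ↥(Sᶜ) := Finset.univ.filter (fun v => (↑v : V) ∈ T) with hX
  -- vertices outside X have all their neighbors in Sᶜ
  have hnbr : ∀ v : ↥(Sᶜ), v ∉ X → ∀ w : V, G.Adj (↑v) w → w ∈ Sᶜ := by
    intro v hv w hadj
    by_contra hw
    apply hv
    rw [hX, Finset.mem_filter]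
    refine ⟨Finset.mem_univ _, ?_⟩
    rw [hT]
    have hwS : w ∈ S := not_not.mp hw
    refine ⟨⟨?_, v.2⟩, v.2⟩
    exact Set.mem_biUnion hwS hadj.symm
  -- degree transfer
  have hdeg : ∀ v : ↥(Sᶜ), (∀ w : V, G.Adj (↑v) w → w ∈ Sᶜ) →
      H.degree v = (G.neighborSet (↑v : V)).ncard := by
    intro v hv
    rw [← card_neighborFinset_eq_degree, Set.ncard_eq_toFinset_card']
    apply Finset.card_bij (fun (w : ↥(Sᶜ)) _ => (↑w : V))
    · intro w hw
      rw [SimpleGraph.mem_neighborFinset] at hw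
      rw [Set.mem_toFinset]
      exact hw
    · intro w₁ h₁ w₂ h₂ hww
      exact Subtype.ext hww
    · intro w hw
      rw [Set.mem_toFinset] at hw
      have hw' : w ∈ Sᶜ := hv w hw
      refine ⟨⟨w, hw'⟩, ?_, rfl⟩
      rw [SimpleGraph.mem_neighborFinset]
      exact hw
  -- apply the forest lemma
  have hmain := forest_main H hac X (by
      intro v hv
      rw [hdeg v (hnbr v hv)]
      exact hG.1 ↑v)
    (by
      intro u v hu hv hadj hdu hdv
      have hGu : (G.neighborSet (↑u : V)).ncard = 2 := by rw [← hdeg u (hnbr u hu)]; exact hdu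
      have hGv : (G.neighborSet (↑v : V)).ncard = 2 := by rw [← hdeg v (hnbr v hv)]; exact hdv
      have hadjG : G.Adj ↑u ↑v := hadj
      obtain ⟨w, hwu, hwv⟩ := hG.2 ↑u ↑v hadjG hGu hGv
      have hwS : w ∈ Sᶜ := hnbr u hu w hwu
      set w' : ↥(Sᶜ) := ⟨w, hwS⟩ with hw'
      have hadjuw : H.Adj u w' := hwu
      have hadjvw : H.Adj v w' := hwv
      have hne_wu : w' ≠ u := fun h => (G.ne_of_adj hwu) (congrArg Subtype.val h).symm
      have hne_wv : w' ≠ v := fun h => (G.ne_of_adj hwv) (congrArg Subtype.val h).symm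
      have hne_uv : u ≠ v := fun h => (G.ne_of_adj hadjG) (congrArg Subtype.val h)
      have hbridge := (isAcyclic_iff_forall_adj_isBridge.mp hac) hadj
      apply hbridge
      have h1 : (H \ fromEdgeSet {s(u, v)}).Adj u w' := by
        refine ⟨hadjuw, ?_⟩
        rw [fromEdgeSet_adj]
        rintro ⟨hmem, -⟩
        rw [Set.mem_singleton_iff, Sym2.eq_iff] at hmem
        rcases hmem with ⟨-, h⟩ | ⟨h, -⟩
        · exact hne_wv h
        · exact hne_uv h
      have h2 : (H \ fromEdgeSet {s(u, v)}).Adj w' v := by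
        refine ⟨hadjvw.symm, ?_⟩
        rw [fromEdgeSet_adj]
        rintro ⟨hmem, -⟩
        rw [Set.mem_singleton_iff, Sym2.eq_iff] at hmem
        rcases hmem with ⟨h, -⟩ | ⟨h, -⟩
        · exact hne_wu h
        · exact hne_wv h
      exact h1.reachable.trans h2.reachable)
  -- transfer cardinalities
  have hcard1 : (Sᶜ : Set V).ncard = Fintype.card ↥(Sᶜ) := by
    rw [← Nat.card_coe_set_eq, Nat.card_eq_fintype_card]
  have hcard2 : X.card = T.ncard := by
    rw [Set.ncard_eq_toFinset_card']
    apply Finset.card_bij (fun (v : ↥(Sᶜ)) _ => (↑v : V))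
    · intro v hv
      rw [hX, Finset.mem_filter] at hv
      rw [Set.mem_toFinset]
      exact hv.2
    · intro v₁ h₁ v₂ h₂ hvv
      exact Subtype.ext hvv
    · intro w hw
      rw [Set.mem_toFinset] at hw
      have hw' : w ∈ Sᶜ := hw.2
      refine ⟨⟨w, hw'⟩, ?_, rfl⟩
      rw [hX, Finset.mem_filter]
      exact ⟨Finset.mem_univ _, hw⟩
  rw [hcard1, ← hcard2]
  exact hmain
end

section
/- In a reduced graph G with n vertices and maximum degree Δ, every feedback vertex set has size at least n/(5Δ). -/
/-!
Let `F = V \ S`, so that `G[F]` is a forest. The vertices of `F` of degree 2 in `G` with both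
neighbours in `F` form an independent set `D` of the forest: two adjacent ones have a common
neighbour, which would close a triangle in `G[F]`. As a forest has fewer edges than vertices,
`|D| ≤ |F \ D|`. Every other vertex of `F` has degree at least 3 or a neighbour in `S`, and the
same degree count bounds their number by twice the number of `F`–`S` edges, hence by `2Δ|S|`.
So `|F| ≤ 4Δ|S|` and `n ≤ 5Δ|S|`.
-/

open SimpleGraph

open Finset

namespace SimpleGraph

variable {V : Type*} [Fintype V] {G : SimpleGraph V} [DecidableRel G.Adj]

theorem IsAcyclic.card_edgeFinset_le (hG : G.IsAcyclic) : #G.edgeFinset ≤ Fintype.card V := by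
  classical
  cases isEmpty_or_nonempty V
  · simp [Subsingleton.elim G ⊥]
  · obtain ⟨T, hGT, -, hT⟩ := connected_top.exists_isTree_le_of_le_of_isAcyclic le_top hG
    have := hT.card_edgeFinset
    have := card_le_card (edgeFinset_mono hGT)
    omega

theorem IsAcyclic.sum_degree_le (hG : G.IsAcyclic) : ∑ v, G.degree v ≤ 2 * Fintype.card V := by
  rw [sum_degrees_eq_twice_card_edges]
  exact Nat.mul_le_mul_left 2 hG.card_edgeFinset_le

variable (G) in
theorem ncard_neighborSet_eq_degree (v : V) : (G.neighborSet v).ncard = G.degree v := by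
  rw [Set.ncard_eq_toFinset_card', ← neighborFinset_def, card_neighborFinset_eq_degree]

theorem IsAcyclic.card_filter_le_two_mul_sum (hG : G.IsAcyclic) (x : V → ℕ)
    (hx : ∀ v, 2 ≤ G.degree v + x v) :
    #{v | ¬(G.degree v = 2 ∧ x v = 0)} ≤ 2 * ∑ v, x v := by
  have hpt v :
      (if ¬(G.degree v = 2 ∧ x v = 0) then 1 else 0) + 2 ≤ 2 * x v + G.degree v := by
    have := hx v
    split_ifs <;> omega
  have := sum_le_sum fun v (_ : v ∈ univ) => hpt v
  rw [sum_add_distrib, sum_boole, Nat.cast_id, sum_add_distrib, ← mul_sum, sum_const, card_univ,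
    smul_eq_mul] at this
  have := hG.sum_degree_le
  omega

variable [DecidableEq V]

variable (G) in
theorem sum_card_neighborFinset_inter_comm (s t : Finset V) :
    ∑ v ∈ s, #(G.neighborFinset v ∩ t) = ∑ u ∈ t, #(G.neighborFinset u ∩ s) := by
  convert sum_card_bipartiteAbove_eq_sum_card_bipartiteBelow (s := s) (t := t) (r := G.Adj)
    using 3 <;> ext <;> simp [bipartiteAbove, bipartiteBelow, adj_comm, and_comm]

variable (G) in
theorem sum_card_neighborFinset_inter_le (s t : Finset V) :
    ∑ v ∈ s, #(G.neighborFinset v ∩ t) ≤ G.maxDegree * #t := by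
  rw [G.sum_card_neighborFinset_inter_comm, mul_comm, ← smul_eq_mul, ← sum_const]
  refine sum_le_sum fun u _ => (card_le_card inter_subset_left).trans ?_
  rw [card_neighborFinset_eq_degree]
  exact G.degree_le_maxDegree u

theorem IsIndepSet.sum_degree_le_sum_degree_compl {D : Finset V} (hD : G.IsIndepSet D) :
    ∑ v ∈ D, G.degree v ≤ ∑ v ∈ Dᶜ, G.degree v := calc
  ∑ v ∈ D, G.degree v = ∑ v ∈ D, #(G.neighborFinset v ∩ Dᶜ) := by
    refine sum_congr rfl fun v hv => ?_
    rw [← card_neighborFinset_eq_degree, inter_eq_left.2 fun u hu => ?_]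
    have hvu := (mem_neighborFinset G v u).1 hu
    exact mem_compl.2 fun huD => hD hv huD hvu.ne hvu
  _ = ∑ u ∈ Dᶜ, #(G.neighborFinset u ∩ D) := G.sum_card_neighborFinset_inter_comm _ _
  _ ≤ ∑ u ∈ Dᶜ, G.degree u := sum_le_sum fun u _ =>
    (card_le_card inter_subset_left).trans_eq (card_neighborFinset_eq_degree G u)

theorem IsAcyclic.card_le_card_compl_of_isIndepSet (hG : G.IsAcyclic) {D : Finset V}
    (hD : G.IsIndepSet D) (hdeg : ∀ v ∈ D, 2 ≤ G.degree v) : #D ≤ #Dᶜ := by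
  have hD2 : #D • 2 ≤ ∑ v ∈ D, G.degree v := card_nsmul_le_sum D _ 2 hdeg
  have := hD.sum_degree_le_sum_degree_compl
  have := sum_add_sum_compl D fun v => G.degree v
  have := hG.sum_degree_le
  have := card_add_card_compl D
  rw [smul_eq_mul] at hD2
  omega

theorem degree_induce_compl_add_card_inter (t : Finset V) (v : ↥(↑t : Set V)ᶜ) :
    (G.induce (↑t)ᶜ).degree v + #(G.neighborFinset v ∩ t) = G.degree v := by
  rw [← card_neighborFinset_eq_degree, ← card_map, map_neighborFinset_induce,
    Set.toFinset_compl, toFinset_coe, ← sdiff_eq_inter_compl, card_sdiff_add_card_inter,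
    card_neighborFinset_eq_degree]

end SimpleGraph

theorem Reduced.two_le_degree {V : Type*} [Fintype V] {G : SimpleGraph V} [DecidableRel G.Adj]
    (hG : Reduced G) (v : V) : 2 ≤ G.degree v :=
  G.ncard_neighborSet_eq_degree v ▸ hG.1 v

theorem Reduced.isIndepSet_induce {V : Type*} {G : SimpleGraph V} (hG : Reduced G) {s : Set V}
    (hs : (G.induce s).IsAcyclic) :
    (G.induce s).IsIndepSet {v | (G.neighborSet v).ncard = 2 ∧ G.neighborSet v ⊆ s} := by
  rintro v ⟨hv2, hvs⟩ u ⟨hu2, -⟩ - hvu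
  classical
  obtain ⟨w, hvw, huw⟩ := hG.2 v u hvu hv2 hu2
  let w' : s := ⟨w, hvs hvw⟩
  exact hs.cliqueFree (n := 3) le_rfl {v, u, w'} (is3Clique_triple_iff.2 ⟨hvu, hvw, huw⟩)

theorem fvs_size_lower_bound {V : Type*} [Fintype V] (G : SimpleGraph V)
    [DecidableRel G.Adj] (hG : Reduced G) (hΔ : 1 ≤ G.maxDegree)
    (S : Set V) (hS : IsFVS G S) :
    Fintype.card V ≤ 5 * G.maxDegree * S.ncard := by
  classical
  rw [Set.ncard_eq_toFinset_card', mul_assoc]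
  set T := S.toFinset
  have hF : (G.induce (↑T)ᶜ).IsAcyclic := by rw [Set.coe_toFinset]; exact hS
  set H := G.induce (↑T)ᶜ
  let x : ↥(↑T : Set V)ᶜ → ℕ := fun v => #(G.neighborFinset v ∩ T)
  have hdeg v : H.degree v + x v = G.degree v := G.degree_induce_compl_add_card_inter T v
  let D : Finset ↥(↑T : Set V)ᶜ := {v | H.degree v = 2 ∧ x v = 0}
  have hD : H.IsIndepSet D := by
    refine (hG.isIndepSet_induce hF).mono fun v hv => ?_
    obtain ⟨h2, h0⟩ := (mem_filter.1 hv).2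
    refine ⟨by rw [ncard_neighborSet_eq_degree, ← hdeg, h2, h0], fun u hvu huT => ?_⟩
    have hempty : G.neighborFinset v ∩ T = ∅ := card_eq_zero.1 h0
    simpa [hempty] using mem_inter.2 ⟨(mem_neighborFinset G v u).2 hvu, huT⟩
  have hhalf : #D ≤ #Dᶜ :=
    hF.card_le_card_compl_of_isIndepSet hD fun v hv => (mem_filter.1 hv).2.1.ge
  have hrest : #Dᶜ ≤ 2 * ∑ v, x v := by
    rw [compl_filter]
    exact hF.card_filter_le_two_mul_sum x fun v => hdeg v ▸ hG.two_le_degree v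
  have hx : ∑ v, x v ≤ G.maxDegree * #T := by
    rw [← sum_subtype Tᶜ (by simp) fun v => #(G.neighborFinset v ∩ T)]
    exact G.sum_card_neighborFinset_inter_le _ _
  have hcard : #D + #Dᶜ + #T = Fintype.card V := by
    rw [card_add_card_compl, ← Set.toFinset_card, Set.toFinset_compl, toFinset_coe,
      card_compl_add_card]
  have hT : #T ≤ G.maxDegree * #T := Nat.le_mul_of_pos_left _ hΔ
  omega
end

section
/- Let G be a graph in which a vertex u is adjacent to every other vertex, G - u is a forest, and every connected component of G - u has at least 2 vertices. Let F = V∖{u} = L ∪ R be a bipartition of the forest G - u with |L| ≤ |R|. Then R is a minimal feedback vertex set of G of size at least d(u)/2. -/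
/-!
Every edge of `G - u` joins `L` to `R`, so deleting `R` leaves only edges at `u`: a star, hence a
forest. Each `r ∈ R` has a neighbour `x` in `G - u` (its component is nontrivial), necessarily in
`L`, and `u, r, x` is a triangle avoiding `R ∖ {r}`; so no proper subset of `R` is a feedback vertex
set. Finally `d(u) = |L ∪ R| ≤ |L| + |R| ≤ 2|R|`.
-/

open SimpleGraph

section

variable {V : Type*} {G : SimpleGraph V}

lemma isFVS_of_forall_adj_eq {S : Set V} {a : V}
    (h : ∀ x y, G.Adj x y → x ∉ S → y ∉ S → x = a ∨ y = a) : IsFVS G S :=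
  ((isAcyclic_starGraph a).induce Sᶜ).anti fun x y hxy =>
    show (starGraph a).Adj x y from starGraph_adj.mpr ⟨G.ne_of_adj hxy, h x y hxy x.2 y.2⟩

lemma not_isFVS_of_triangle {T : Set V} {a b c : V} (hab : G.Adj a b) (hac : G.Adj a c)
    (hbc : G.Adj b c) (ha : a ∉ T) (hb : b ∉ T) (hc : c ∉ T) : ¬ IsFVS G T := fun hT => by
  classical
  refine hT.cliqueFree le_rfl {⟨a, ha⟩, ⟨b, hb⟩, ⟨c, hc⟩} ?_
  exact is3Clique_triple_iff.mpr ⟨hab, hac, hbc⟩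

lemma isMinFVS_of_forall_mem_triangle {S : Set V} (hS : IsFVS G S)
    (h : ∀ s ∈ S, ∃ b c, b ∉ S ∧ c ∉ S ∧ G.Adj s b ∧ G.Adj s c ∧ G.Adj b c) : IsMinFVS G S := by
  refine ⟨hS, fun T hTS => ?_⟩
  obtain ⟨s, hsS, hsT⟩ := Set.exists_of_ssubset hTS
  obtain ⟨b, c, hbS, hcS, hsb, hsc, hbc⟩ := h s hsS
  exact not_isFVS_of_triangle hsb hsc hbc hsT
    (fun hbT => hbS (hTS.subset hbT)) (fun hcT => hcS (hTS.subset hcT))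

lemma SimpleGraph.Reachable.exists_adj_of_ne {v w : V} (h : G.Reachable v w) (hvw : v ≠ w) :
    ∃ x, G.Adj v x :=
  let ⟨p⟩ := h
  ⟨p.snd, p.adj_snd (Walk.not_nil_of_ne hvw)⟩

end

theorem bipartition_side_is_minimal_fvs_general {V : Type*}
    (G : SimpleGraph V) (u : V)
    (hu : G.neighborSet u = ({u}ᶜ : Set V))
    (hcomp : ∀ v : ({u}ᶜ : Set V), ∃ w : ({u}ᶜ : Set V), w ≠ v ∧
      (G.induce ({u}ᶜ : Set V)).Reachable v w)
    (L R : Set V) (hLR : L ∪ R = ({u}ᶜ : Set V)) (hdisj : Disjoint L R)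
    (hbip : ∀ v w : V, G.Adj v w → v ≠ u → w ≠ u →
      ((v ∈ L ∧ w ∈ R) ∨ (v ∈ R ∧ w ∈ L)))
    (hle : L.ncard ≤ R.ncard) :
    IsMinFVS G R ∧ (G.neighborSet u).ncard ≤ 2 * R.ncard := by
  have hadj_u : ∀ v, v ≠ u → G.Adj u v := fun v hv => by
    rw [← mem_neighborSet, hu]; exact hv
  have hRu : u ∉ R := fun h => (hLR ▸ Set.mem_union_right L h : u ∈ ({u}ᶜ : Set V)) rfl
  have hR : IsFVS G R := isFVS_of_forall_adj_eq fun x y hxy hx hy => by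
    by_contra! hne
    rcases hbip x y hxy hne.1 hne.2 with ⟨-, hyR⟩ | ⟨hxR, -⟩
    exacts [hy hyR, hx hxR]
  refine ⟨isMinFVS_of_forall_mem_triangle hR fun r hr => ?_, ?_⟩
  · have hru : r ≠ u := ne_of_mem_of_not_mem hr hRu
    obtain ⟨w, hwr, hreach⟩ := hcomp ⟨r, hru⟩
    obtain ⟨⟨x, hxu⟩, hrx⟩ := hreach.exists_adj_of_ne hwr.symm
    have hxR : x ∉ R := by
      rcases hbip r x hrx hru hxu with ⟨hrL, -⟩ | ⟨-, hxL⟩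
      exacts [absurd hr (hdisj.notMem_of_mem_left hrL), hdisj.notMem_of_mem_left hxL]
    exact ⟨u, x, hRu, hxR, (hadj_u r hru).symm, hrx, hadj_u x hxu⟩
  · rw [hu, ← hLR]
    exact (Set.ncard_union_le L R).trans (by omega)

theorem bipartition_side_is_minimal_fvs {V : Type*} [Fintype V] [DecidableEq V]
    (G : SimpleGraph V) (u : V)
    (hu : G.neighborSet u = ({u}ᶜ : Set V))
    (hacyc : (G.induce ({u}ᶜ : Set V)).IsAcyclic)
    (hcomp : ∀ v : ({u}ᶜ : Set V), ∃ w : ({u}ᶜ : Set V), w ≠ v ∧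
      (G.induce ({u}ᶜ : Set V)).Reachable v w)
    (L R : Set V) (hLR : L ∪ R = ({u}ᶜ : Set V)) (hdisj : Disjoint L R)
    (hbip : ∀ v w : V, G.Adj v w → v ≠ u → w ≠ u →
      ((v ∈ L ∧ w ∈ R) ∨ (v ∈ R ∧ w ∈ L)))
    (hle : L.ncard ≤ R.ncard) :
    IsMinFVS G R ∧ (G.neighborSet u).ncard ≤ 2 * R.ncard :=
  bipartition_side_is_minimal_fvs_general G u hu hcomp L R hLR hdisj hbip hle
end
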